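/- arXiv:1311.2089 — 5 statements merged into one kernel-verified Lean document; each statement's English description precedes it below -/
import Mathlib

section
/- Let R be a commutative local ring with principal maximal ideal m = (p) ≠ 0 satisfying m² = 0. Then R is self-injective, i.e., R is injective as a module over itself. -/
theorem stmt_2 (R : Type*) [CommRing R] [IsLocalRing R] (p : R)
    (hm : IsLocalRing.maximalIdeal R = Ideal.span {p})
    (hne : IsLocalRing.maximalIdeal R ≠ ⊥)
    (hsq : (IsLocalRing.maximalIdeal R) ^ 2 = ⊥) :
    Module.Injective R R := by
  have hp : p ∈ IsLocalRing.maximalIdeal R := by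
    rw [hm]; exact Ideal.mem_span_singleton_self p
  have hpp : p * p = 0 := by
    have : p * p ∈ (IsLocalRing.maximalIdeal R) ^ 2 := by
      rw [pow_two]; exact Ideal.mul_mem_mul hp hp
    rwa [hsq, Ideal.mem_bot] at this
  have hp0 : p ≠ 0 := by
    intro h
    apply hne
    rw [hm, h, Ideal.span_singleton_eq_bot]
  apply Module.Baer.injective
  intro I f
  by_cases hI : I = ⊥
  · refine ⟨0, fun x hx => ?_⟩
    have hx' : x = 0 := by have h2 := hx; rw [hI, Ideal.mem_bot] at h2; exact h2
    have : (⟨x, hx⟩ : I) = 0 := Subtype.ext hx'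
    simp [this]
  by_cases hIT : I = ⊤
  · refine ⟨LinearMap.toSpanSingleton R R (f ⟨1, hIT ▸ Submodule.mem_top⟩), fun x hx => ?_⟩
    have : (⟨x, hx⟩ : I) = x • ⟨1, hIT ▸ Submodule.mem_top⟩ := Subtype.ext (by simp)
    rw [this, map_smul]
    rfl
  -- I ≠ ⊥, I ≠ ⊤ : show I = maximal ideal
  have hle : I ≤ IsLocalRing.maximalIdeal R := IsLocalRing.le_maximalIdeal hIT
  have hIm : I = IsLocalRing.maximalIdeal R := by
    refine le_antisymm hle ?_
    obtain ⟨x, hxI, hx0⟩ := Submodule.exists_mem_ne_zero_of_ne_bot hI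
    have hxm : x ∈ Ideal.span {p} := hm ▸ hle hxI
    obtain ⟨a, ha⟩ := Ideal.mem_span_singleton'.mp hxm
    have haU : IsUnit a := by
      by_contra hau
      have ham : a ∈ IsLocalRing.maximalIdeal R := hau
      rw [hm, Ideal.mem_span_singleton'] at ham
      obtain ⟨b, hb⟩ := ham
      apply hx0
      rw [← ha, ← hb, mul_assoc, hpp, mul_zero]
    obtain ⟨u, hu⟩ := haU
    have hpI : p ∈ I := by
      have : (↑u⁻¹ : R) * x ∈ I := Ideal.mul_mem_left I _ hxI
      rwa [← ha, ← hu, ← mul_assoc, Units.inv_mul, one_mul] at this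
    rw [hm, Ideal.span_le, Set.singleton_subset_iff]
    exact hpI
  subst hIm
  set c := f ⟨p, hp⟩ with hc
  have hpc : p * c = 0 := by
    have : (⟨p * p, Ideal.mul_mem_left _ p hp⟩ : IsLocalRing.maximalIdeal R)
        = p • ⟨p, hp⟩ := rfl
    calc p * c = p • c := rfl
      _ = f (p • ⟨p, hp⟩) := (map_smul f p _).symm
      _ = f ⟨p * p, Ideal.mul_mem_left _ p hp⟩ := by rw [← this]
      _ = 0 := by
          have : (⟨p * p, Ideal.mul_mem_left _ p hp⟩ : IsLocalRing.maximalIdeal R) = 0 :=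
            Subtype.ext hpp
          rw [this, map_zero]
  have hcm : c ∈ IsLocalRing.maximalIdeal R := by
    by_contra hcu
    have : IsUnit c := by
      by_contra h; exact hcu h
    obtain ⟨v, hv⟩ := this
    apply hp0
    have := congrArg (· * (↑v⁻¹ : R)) hpc
    simpa [← hv, mul_assoc] using this
  rw [hm, Ideal.mem_span_singleton'] at hcm
  obtain ⟨a, ha⟩ := hcm
  refine ⟨LinearMap.toSpanSingleton R R a, fun x hx => ?_⟩
  obtain ⟨b, hb⟩ := Ideal.mem_span_singleton'.mp (hm ▸ hx)
  have hxb : (⟨x, hx⟩ : IsLocalRing.maximalIdeal R) = b • ⟨p, hp⟩ :=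
    Subtype.ext (by simp [← hb])
  rw [hxb, map_smul, ← hc, ← ha]
  show x * a = b • (a * p)
  rw [← hb, smul_eq_mul]; ring
end

section
/- Let R be a commutative local ring with principal maximal ideal m = (p) ≠ 0 and m² = 0, and suppose n ≥ 3 is odd, 2p = 0, and there exists an integer d with d·1_R ∈ m \ {0}. If elements q₁, …, q_{n−3} ∈ R satisfy up = p q₁, up = q₁ p + p q₂, …, up = q_{n−4} p + p q_{n−3}, and up = q_{n−3} p, where u is a unit with d·1_R = up, then one derives a contradiction; i.e., no such q₁, …, q_{n−3} exist. -/
theorem stmt_10 (R : Type*) [CommRing R] [IsLocalRing R] (p : R)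
    (hm : IsLocalRing.maximalIdeal R = Ideal.span {p})
    (hne : IsLocalRing.maximalIdeal R ≠ ⊥)
    (hsq : (IsLocalRing.maximalIdeal R) ^ 2 = ⊥)
    (n : ℕ) (hn3 : 3 ≤ n) (hodd : Odd n)
    (h2p : 2 * p = 0)
    (u : R) (hu : IsUnit u) (d : ℤ) (hd : (d : R) = u * p) (hdne : u * p ≠ 0)
    (q : ℕ → R) (hq0 : q 0 = 0) (hqn : q (n - 2) = 0)
    (heq : ∀ i, 1 ≤ i → i ≤ n - 2 → u * p = q (i - 1) * p + p * q i) :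
    False := by
  have key : ∀ j, 2 * j ≤ n - 3 → q (2 * j) * p = 0 := by
    intro j
    induction j with
    | zero => intro _; simp [hq0]
    | succ k ih =>
      intro hle
      have hk : 2 * k ≤ n - 3 := by omega
      have h1 := heq (2 * k + 1) (by omega) (by omega)
      have h2 := heq (2 * k + 2) (by omega) (by omega)
      have e1 : (2 * k + 1) - 1 = 2 * k := by omega
      have e2 : (2 * k + 2) - 1 = 2 * k + 1 := by omega
      rw [e1] at h1
      rw [e2] at h2
      have : q (2 * (k + 1)) * p = q (2 * k) * p := by
        have : 2 * (k + 1) = 2 * k + 2 := by ring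
        rw [this]
        have := h1.symm.trans h2
        linear_combination -this
      rw [this, ih hk]
  obtain ⟨m, hmm⟩ := hodd
  have hm1 : 1 ≤ m := by omega
  have hqn3 : q (n - 3) * p = 0 := by
    have : n - 3 = 2 * (m - 1) := by omega
    rw [this]
    exact key (m - 1) (by omega)
  have hlast := heq (n - 2) (by omega) (by omega)
  have e : (n - 2) - 1 = n - 3 := by omega
  rw [e, hqn3, hqn, mul_zero, add_zero] at hlast
  exact hdne hlast
end

section
/- Let R be a commutative local ring with principal maximal ideal m = (p) ≠ 0 and m² = 0. If α : R^a → R^b is an R-linear map between finite free modules, then there exist R-linear isomorphisms φ₁, φ₂ and natural numbers u, v such that φ₂ ∘ α ∘ φ₁⁻¹ is given by a block diagonal matrix diag(p·I_u, I_v, 0). -/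
/-!
Induction on the number of columns. If some entry of `A` is a unit, move it to a corner and take
the Schur complement: `A ~ diag(S, 1)`. Otherwise every entry lies in `m = (p)`, so `A = p • C`;
as `p` kills every non-unit (`m² = 0`), either `A = 0` or `C` has a unit entry, and then
`A ~ diag(p • S, p)`. The entries of `p • S` lie in `m`, so its normal form contains no `1`.
This produces the diagonal `1, …, 1, p, …, p, 0, …`, and a permutation of rows and columns
moves the `p`s to the front.
-/

section DiagSeq

variable {R : Type*} [Zero R]

def diagSeq (x y : R) (u v k : ℕ) : R :=
  if k < u then x else if k < u + v then y else 0

def swapBlocks (u v : ℕ) : Equiv.Perm ℕ where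
  toFun k := if k < u then k + v else if k < u + v then k - u else k
  invFun k := if k < v then k + u else if k < u + v then k - v else k
  left_inv k := by dsimp only; split_ifs <;> omega
  right_inv k := by dsimp only; split_ifs <;> omega

theorem swapBlocks_lt_iff {u v n : ℕ} (h : u + v ≤ n) (k : ℕ) :
    swapBlocks u v k < n ↔ k < n := by
  simp only [swapBlocks, Equiv.coe_fn_mk]; split_ifs <;> omega

theorem diagSeq_comp_swapBlocks (x y : R) (u v : ℕ) :
    diagSeq y x v u ∘ swapBlocks u v = diagSeq x y u v := by
  ext k
  simp only [diagSeq, swapBlocks, Function.comp_apply, Equiv.coe_fn_mk]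
  split_ifs <;> first | rfl | omega

theorem diagSeq_succ_succ (x y : R) (u v k : ℕ) :
    diagSeq x y (u + 1) v (k + 1) = diagSeq x y u v k := by
  simp only [diagSeq]; split_ifs <;> first | rfl | omega

theorem diagSeq_zero_succ_succ (x y : R) (v k : ℕ) :
    diagSeq x y 0 (v + 1) (k + 1) = diagSeq x y 0 v k := by
  simp only [diagSeq]; split_ifs <;> first | rfl | omega

end DiagSeq

namespace Matrix

variable {R : Type*} [CommRing R] {l m n m' n' : Type*} [Fintype l] [Fintype m] [Fintype n]
  [Fintype m'] [Fintype n'] [DecidableEq l] [DecidableEq m] [DecidableEq n] [DecidableEq m']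
  [DecidableEq n']

def Equivalent (A B : Matrix m n R) : Prop :=
  ∃ (P : Matrix m m R) (Q : Matrix n n R), IsUnit P.det ∧ IsUnit Q.det ∧ P * A * Q = B

namespace Equivalent

theorem refl (A : Matrix m n R) : A.Equivalent A :=
  ⟨1, 1, by simp, by simp, by simp⟩

theorem trans {A B C : Matrix m n R} (hAB : A.Equivalent B) (hBC : B.Equivalent C) :
    A.Equivalent C := by
  obtain ⟨P, Q, hP, hQ, rfl⟩ := hAB
  obtain ⟨P', Q', hP', hQ', rfl⟩ := hBC
  refine ⟨P' * P, Q * Q', ?_, ?_, by simp only [Matrix.mul_assoc]⟩ <;>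
    rw [det_mul] <;> exact IsUnit.mul ‹_› ‹_›

theorem symm {A B : Matrix m n R} (h : A.Equivalent B) : B.Equivalent A := by
  obtain ⟨P, Q, hP, hQ, rfl⟩ := h
  refine ⟨P⁻¹, Q⁻¹, isUnit_nonsing_inv_det _ hP, isUnit_nonsing_inv_det _ hQ, ?_⟩
  rw [Matrix.mul_assoc P, nonsing_inv_mul_cancel_left _ _ hP, mul_nonsing_inv_cancel_right _ _ hQ]

theorem smul {A B : Matrix m n R} (h : A.Equivalent B) (r : R) :
    (r • A).Equivalent (r • B) := by
  obtain ⟨P, Q, hP, hQ, rfl⟩ := h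
  exact ⟨P, Q, hP, hQ, by rw [Matrix.mul_smul, Matrix.smul_mul]⟩

theorem submatrix {A B : Matrix m n R} (h : A.Equivalent B) (e : m' ≃ m) (f : n' ≃ n) :
    (A.submatrix e f).Equivalent (B.submatrix e f) := by
  obtain ⟨P, Q, hP, hQ, rfl⟩ := h
  refine ⟨P.submatrix e e, Q.submatrix f f, by rwa [det_submatrix_equiv_self],
    by rwa [det_submatrix_equiv_self], ?_⟩
  rw [submatrix_mul_equiv P A, submatrix_mul_equiv _ Q]

theorem reindex_iff {A B : Matrix m n R} (e : m ≃ m') (f : n ≃ n') :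
    (reindex e f A).Equivalent (reindex e f B) ↔ A.Equivalent B := by
  refine ⟨fun h => ?_, fun h => h.submatrix _ _⟩
  simpa using h.submatrix e f

theorem fromBlocks_diagonal {A A' : Matrix m n R} {D D' : Matrix m' n' R}
    (hA : A.Equivalent A') (hD : D.Equivalent D') :
    (fromBlocks A 0 0 D).Equivalent (fromBlocks A' 0 0 D') := by
  obtain ⟨P, Q, hP, hQ, rfl⟩ := hA
  obtain ⟨P', Q', hP', hQ', rfl⟩ := hD
  refine ⟨fromBlocks P 0 0 P', fromBlocks Q 0 0 Q', ?_, ?_, by simp [fromBlocks_multiply]⟩ <;>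
    rw [det_fromBlocks_zero₂₁] <;> exact IsUnit.mul ‹_› ‹_›

theorem forall_mem {A B : Matrix m n R} (h : A.Equivalent B) {I : Ideal R}
    (hA : ∀ i j, A i j ∈ I) (i : m) (j : n) : B i j ∈ I := by
  obtain ⟨P, Q, -, -, rfl⟩ := h
  simp only [mul_apply]
  exact I.sum_mem fun k _ => I.mul_mem_right _ (I.sum_mem fun k' _ => I.mul_mem_left _ (hA _ _))

end Equivalent

theorem equivalent_submatrix_perm (A : Matrix m n R) (σ : Equiv.Perm m) (τ : Equiv.Perm n) :
    A.Equivalent (A.submatrix σ τ) := by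
  refine ⟨σ.permMatrix R, Equiv.Perm.permMatrix R τ.symm, ?_, ?_, ?_⟩
  · rw [det_permutation]; exact σ.sign.isUnit.map (Int.castRingHom R)
  · rw [det_permutation]; exact (Equiv.Perm.sign τ.symm).isUnit.map (Int.castRingHom R)
  · rw [Equiv.Perm.permMatrix, Equiv.Perm.permMatrix, PEquiv.toMatrix_toPEquiv_mul,
      PEquiv.mul_toMatrix_toPEquiv]
    simp

theorem exists_equivalent_fromBlocks_one (A : Matrix (m ⊕ l) (n ⊕ l) R)
    (h : IsUnit A.toBlocks₂₂.det) : ∃ S : Matrix m n R, A.Equivalent (fromBlocks S 0 0 1) := by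
  have := A.toBlocks₂₂.invertibleOfIsUnitDet h
  set D := A.toBlocks₂₂
  set S := A.toBlocks₁₁ - A.toBlocks₁₂ * ⅟D * A.toBlocks₂₁
  refine ⟨S, ?_⟩
  have hSchur := fromBlocks_eq_of_invertible₂₂ A.toBlocks₁₁ A.toBlocks₁₂ A.toBlocks₂₁ D
  rw [fromBlocks_toBlocks] at hSchur
  have hSchurEquiv : (fromBlocks S 0 0 D).Equivalent A :=
    ⟨_, _, by simp, by simp, hSchur.symm⟩
  have hD : D.Equivalent 1 := ⟨⅟D, 1, isUnit_det_of_invertible _, by simp, by simp⟩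
  exact hSchurEquiv.symm.trans ((Equivalent.refl S).fromBlocks_diagonal hD)

def finSuccEquivSumUnit (n : ℕ) : Fin (n + 1) ≃ Fin n ⊕ Unit :=
  (finSuccEquiv n).trans (Equiv.optionEquivSumPUnit _)

def rectDiagonal (b a : ℕ) (d : ℕ → R) : Matrix (Fin b) (Fin a) R :=
  of fun i j => if (i : ℕ) = j then d i else 0

variable {a b : ℕ}

theorem reindex_rectDiagonal_succ (d : ℕ → R) :
    reindex (finSuccEquivSumUnit b) (finSuccEquivSumUnit a) (rectDiagonal (b + 1) (a + 1) d) =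
      fromBlocks (rectDiagonal b a fun k => d (k + 1)) 0 0 (d 0 • 1) := by
  ext (i | i) (j | j) <;> simp [rectDiagonal, finSuccEquivSumUnit]

theorem exists_reindex_equivalent_fromBlocks_one (A : Matrix (Fin (b + 1)) (Fin (a + 1)) R)
    {i : Fin (b + 1)} {j : Fin (a + 1)} (h : IsUnit (A i j)) :
    ∃ S : Matrix (Fin b) (Fin a) R,
      (reindex (finSuccEquivSumUnit b) (finSuccEquivSumUnit a) A).Equivalent
        (fromBlocks S 0 0 1) := by
  set A' := A.submatrix (Equiv.swap 0 i) (Equiv.swap 0 j)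
  have hcorner : (reindex (finSuccEquivSumUnit b) (finSuccEquivSumUnit a) A').toBlocks₂₂.det =
      A i j := by
    simp [A', det_unique, toBlocks₂₂, finSuccEquivSumUnit]
  obtain ⟨S, hS⟩ := exists_equivalent_fromBlocks_one _ (hcorner ▸ h)
  exact ⟨S, ((equivalent_submatrix_perm A _ _).submatrix _ _).trans hS⟩

theorem Equivalent.rectDiagonal_succ {A : Matrix (Fin (b + 1)) (Fin (a + 1)) R}
    {S : Matrix (Fin b) (Fin a) R} {d : ℕ → R}
    (hA : (reindex (finSuccEquivSumUnit b) (finSuccEquivSumUnit a) A).Equivalent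
      (fromBlocks S 0 0 (d 0 • 1)))
    (hS : S.Equivalent (rectDiagonal b a fun k => d (k + 1))) :
    A.Equivalent (rectDiagonal (b + 1) (a + 1) d) := by
  rw [← Equivalent.reindex_iff (finSuccEquivSumUnit b) (finSuccEquivSumUnit a),
    reindex_rectDiagonal_succ]
  exact hA.trans (hS.fromBlocks_diagonal (.refl _))

theorem rectDiagonal_equivalent_comp (d : ℕ → R) (σ : Equiv.Perm ℕ)
    (hb : ∀ k, σ k < b ↔ k < b) (ha : ∀ k, σ k < a ↔ k < a) :
    (rectDiagonal b a d).Equivalent (rectDiagonal b a (d ∘ σ)) := by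
  convert equivalent_submatrix_perm (rectDiagonal b a d)
    (Fin.equivSubtype.symm.permCongr (σ.subtypePerm hb))
    (Fin.equivSubtype.symm.permCongr (σ.subtypePerm ha)) using 1
  ext i j
  simp [rectDiagonal, Equiv.permCongr_def, Fin.equivSubtype]

theorem eq_zero_of_equivalent_rectDiagonal_diagSeq {I : Ideal R} (hI : I ≠ ⊤)
    {S : Matrix (Fin b) (Fin a) R} (hS : ∀ i j, S i j ∈ I) {x : R} {v u : ℕ} (ha : v + u ≤ a)
    (hb : v + u ≤ b) (h : S.Equivalent (rectDiagonal b a (diagSeq 1 x v u))) : v = 0 := by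
  by_contra hv
  have hone := h.forall_mem hS ⟨0, by omega⟩ ⟨0, by omega⟩
  simp only [rectDiagonal, diagSeq, of_apply, if_pos trivial, if_pos (Nat.pos_of_ne_zero hv)]
    at hone
  exact hI ((Ideal.eq_top_iff_one I).2 hone)

section MaximalIdealSquareZero

open IsLocalRing

variable [IsLocalRing R] {p : R}

theorem dvd_of_not_isUnit (hm : maximalIdeal R = Ideal.span {p}) {x : R} (hx : ¬IsUnit x) :
    p ∣ x :=
  Ideal.mem_span_singleton.1 (hm ▸ (mem_maximalIdeal x).2 hx)

theorem mul_eq_zero_of_not_isUnit (hm : maximalIdeal R = Ideal.span {p})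
    (hsq : maximalIdeal R ^ 2 = ⊥) {c : R} (hc : ¬IsUnit c) : p * c = 0 := by
  have hp : p ∈ maximalIdeal R := hm ▸ Ideal.mem_span_singleton_self p
  rw [← Ideal.mem_bot, ← hsq, sq]
  exact Ideal.mul_mem_mul hp ((mem_maximalIdeal c).2 hc)

theorem exists_equivalent_rectDiagonal_diagSeq (hm : maximalIdeal R = Ideal.span {p})
    (hsq : maximalIdeal R ^ 2 = ⊥) :
    ∀ {a b : ℕ} (A : Matrix (Fin b) (Fin a) R), ∃ v u, v + u ≤ a ∧ v + u ≤ b ∧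
      A.Equivalent (rectDiagonal b a (diagSeq 1 p v u))
  | 0, b, A => ⟨0, 0, le_rfl, b.zero_le, by convert Equivalent.refl A; ext _ j; exact j.elim0⟩
  | a + 1, b, A => by
    by_cases hunit : ∃ i j, IsUnit (A i j)
    · obtain ⟨i, j, hij⟩ := hunit
      obtain ⟨b, rfl⟩ := Nat.exists_eq_add_one_of_ne_zero i.pos.ne'
      obtain ⟨S, hS⟩ := exists_reindex_equivalent_fromBlocks_one A hij
      obtain ⟨v, u, hva, hvb, hSv⟩ := exists_equivalent_rectDiagonal_diagSeq hm hsq S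
      refine ⟨v + 1, u, by omega, by omega, Equivalent.rectDiagonal_succ (S := S) ?_ ?_⟩
      · simpa [diagSeq] using hS
      · simpa [diagSeq_succ_succ] using hSv
    simp only [not_exists] at hunit
    choose C hC using fun i j => dvd_of_not_isUnit hm (hunit i j)
    by_cases hCunit : ∃ i j, IsUnit (C i j)
    · obtain ⟨i, j, hij⟩ := hCunit
      obtain ⟨b, rfl⟩ := Nat.exists_eq_add_one_of_ne_zero i.pos.ne'
      obtain ⟨S, hS⟩ := exists_reindex_equivalent_fromBlocks_one (of C) hij
      obtain ⟨v, u, hva, hvb, hSv⟩ := exists_equivalent_rectDiagonal_diagSeq hm hsq (p • S)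
      have hpS (i j) : (p • S) i j ∈ maximalIdeal R :=
        hm ▸ Ideal.mem_span_singleton.2 (dvd_mul_right p (S i j))
      obtain rfl := eq_zero_of_equivalent_rectDiagonal_diagSeq (maximalIdeal.isMaximal R).ne_top
        hpS hva hvb hSv
      refine ⟨0, u + 1, by omega, by omega, Equivalent.rectDiagonal_succ (S := p • S) ?_ ?_⟩
      · convert hS.smul p using 1
        · ext i j; exact hC _ _
        · simp [diagSeq, fromBlocks_smul]
      · simpa [diagSeq_zero_succ_succ] using hSv
    · simp only [not_exists] at hCunit
      refine ⟨0, 0, by omega, by omega, ?_⟩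
      convert Equivalent.refl A using 1
      ext i j
      simp [rectDiagonal, diagSeq, hC i j, mul_eq_zero_of_not_isUnit hm hsq (hCunit i j)]

end MaximalIdealSquareZero

end Matrix

theorem stmt_12_general (R : Type*) [CommRing R] [IsLocalRing R] (p : R)
    (hm : IsLocalRing.maximalIdeal R = Ideal.span {p})
    (hsq : (IsLocalRing.maximalIdeal R) ^ 2 = ⊥)
    (a b : ℕ) (A : Matrix (Fin b) (Fin a) R) :
    ∃ (P : Matrix (Fin b) (Fin b) R) (Q : Matrix (Fin a) (Fin a) R) (u v : ℕ),
      IsUnit P.det ∧ IsUnit Q.det ∧ u + v ≤ a ∧ u + v ≤ b ∧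
      P * A * Q = Matrix.of (fun (i : Fin b) (j : Fin a) =>
        if (i : ℕ) = (j : ℕ) ∧ (i : ℕ) < u then p
        else if (i : ℕ) = (j : ℕ) ∧ (i : ℕ) < u + v then 1 else 0) := by
  obtain ⟨v, u, hva, hvb, hA⟩ := Matrix.exists_equivalent_rectDiagonal_diagSeq hm hsq A
  have hswap := Matrix.rectDiagonal_equivalent_comp (diagSeq 1 p v u) (swapBlocks u v)
    (swapBlocks_lt_iff (show u + v ≤ b by omega)) (swapBlocks_lt_iff (show u + v ≤ a by omega))
  rw [diagSeq_comp_swapBlocks] at hswap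
  obtain ⟨P, Q, hP, hQ, hPQ⟩ := hA.trans hswap
  refine ⟨P, Q, u, v, hP, hQ, by omega, by omega, hPQ.trans ?_⟩
  ext i j
  simp only [Matrix.rectDiagonal, diagSeq, Matrix.of_apply]
  split_ifs <;> first | rfl | omega

theorem stmt_12 (R : Type*) [CommRing R] [IsLocalRing R] (p : R)
    (hm : IsLocalRing.maximalIdeal R = Ideal.span {p})
    (hne : IsLocalRing.maximalIdeal R ≠ ⊥)
    (hsq : (IsLocalRing.maximalIdeal R) ^ 2 = ⊥)
    (a b : ℕ) (A : Matrix (Fin b) (Fin a) R) :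
    ∃ (P : Matrix (Fin b) (Fin b) R) (Q : Matrix (Fin a) (Fin a) R) (u v : ℕ),
      IsUnit P.det ∧ IsUnit Q.det ∧ u + v ≤ a ∧ u + v ≤ b ∧
      P * A * Q = Matrix.of (fun (i : Fin b) (j : Fin a) =>
        if (i : ℕ) = (j : ℕ) ∧ (i : ℕ) < u then p
        else if (i : ℕ) = (j : ℕ) ∧ (i : ℕ) < u + v then 1 else 0) :=
  stmt_12_general R p hm hsq a b A
end

section
/- Let R be a commutative local ring with maximal ideal m = (p), m ≠ 0, m² = 0, and let u be a unit of R. Suppose there exist units w₁, …, w_n of R such that w₁·(up) = p·w₂, w₂·p = p·w₃, …, w_{n−1}·p = p·w_n, and w_n·p = (vp)·w₁ for a unit v. Then up = vp in R. In particular, if u, v are units and there is an isomorphism of n-periodic complexes between the complex with differentials (up, p, …, p) and the one with differentials (vp, p, …, p), then up = vp. -/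
theorem stmt_14 (R : Type*) [CommRing R] [IsLocalRing R] (p : R)
    (hm : IsLocalRing.maximalIdeal R = Ideal.span {p})
    (hne : IsLocalRing.maximalIdeal R ≠ ⊥)
    (hsq : (IsLocalRing.maximalIdeal R) ^ 2 = ⊥)
    (n : ℕ) (hn : 3 ≤ n)
    (u v : R) (hu : IsUnit u) (hv : IsUnit v)
    (w : ℕ → R) (hw : ∀ i, 1 ≤ i → i ≤ n → IsUnit (w i))
    (h1 : w 1 * (u * p) = p * w 2)
    (hmid : ∀ i, 2 ≤ i → i ≤ n - 1 → w i * p = p * w (i + 1))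
    (hlast : w n * p = (v * p) * w 1) :
    u * p = v * p := by
  have key : ∀ i, 2 ≤ i → i ≤ n → w 2 * p = w i * p := by
    intro i h2 hle
    induction i with
    | zero => omega
    | succ k ih =>
      rcases Nat.lt_or_ge k 2 with hk | hk
      · interval_cases k
        · omega
        · rfl
      · have h := hmid k hk (by omega)
        rw [ih hk (by omega), h, mul_comm]
  have e1 : w 1 * (u * p) = w 2 * p := by rw [h1, mul_comm]
  have e2 : w 2 * p = w n * p := key n (by omega) le_rfl
  have h2 : w 1 * (u * p) = w 1 * (v * p) := by
    rw [e1, e2, hlast]; ring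
  exact (hw 1 (by omega) (by omega)).mul_left_cancel h2
end

section
/- Let R be a commutative local ring with maximal ideal m = (p), m ≠ 0, m² = 0. Consider a bounded complex of finite free R-modules A₁ → A₂ → ⋯ → Aₙ → A₁ → ⋯ (n-periodic) that is exact and in which every differential α satisfies Im(α) ⊆ m·A_{next} (minimality). Then all the free modules A₁, …, Aₙ have the same rank. -/
open Module Submodule IsLocalRing TensorProduct

lemma aux_finrank {R : Type*} [CommRing R] (I : Ideal R) [Nontrivial R] [I.IsMaximal]
    (A : Type*) [AddCommGroup A] [Module R A]
    [Module.Free R A] [Module.Finite R A] :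
    Module.finrank (R ⧸ I) (A ⧸ (I • (⊤ : Submodule R A))) = Module.finrank R A := by
  haveI : IsScalarTower R (R ⧸ I) (A ⧸ (I • (⊤ : Submodule R A))) :=
    Module.IsTorsionBySet.isScalarTower _
  have e := (quotTensorEquivQuotSMul A I).extendScalarsOfSurjective
    (S := R ⧸ I) Ideal.Quotient.mk_surjective
  rw [← LinearEquiv.finrank_eq e, Module.finrank_baseChange]

section ring

variable {R : Type*} [CommRing R] [IsLocalRing R] {p : R}
  (hm : IsLocalRing.maximalIdeal R = Ideal.span {p})
  (hne : IsLocalRing.maximalIdeal R ≠ ⊥)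
  (hsq : (IsLocalRing.maximalIdeal R) ^ 2 = ⊥)

include hm hne hsq

lemma aux_mul_eq_zero {c : R} (hc : c ∈ maximalIdeal R) : p * c = 0 := by
  rw [hm, Ideal.mem_span_singleton] at hc
  obtain ⟨a, rfl⟩ := hc
  have hp : p * p = 0 := by
    have : p * p ∈ (maximalIdeal R) ^ 2 := by
      rw [pow_two]
      exact Ideal.mul_mem_mul (hm ▸ Ideal.mem_span_singleton_self p)
        (hm ▸ Ideal.mem_span_singleton_self p)
    simpa [hsq] using this
  rw [← mul_assoc, hp, zero_mul]

lemma aux_ann {c : R} (hc : p * c = 0) : c ∈ maximalIdeal R := by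
  by_contra h
  have hu : IsUnit c := by
    simpa using (IsLocalRing.mem_maximalIdeal c).not.mp h
  have hp0 : p = 0 := (hu.mul_left_eq_zero).mp hc
  exact hne (by rw [hm, hp0, Ideal.span_singleton_eq_bot.mpr rfl])

variable (B : Type*) [AddCommGroup B] [Module R B] [Module.Free R B] [Module.Finite R B]

lemma aux_smul_zero {x : B} (hx : x ∈ (maximalIdeal R) • (⊤ : Submodule R B)) :
    p • x = 0 := by
  have : p • x ∈ (Ideal.span {p} * maximalIdeal R) • (⊤ : Submodule R B) := by
    rw [mul_smul]
    exact Submodule.smul_mem_smul (Ideal.mem_span_singleton_self p) hx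
  rwa [← hm, ← pow_two, hsq, Submodule.bot_smul, Submodule.mem_bot] at this

lemma aux_lsmul_ker :
    LinearMap.ker (LinearMap.lsmul R B p) = (maximalIdeal R) • (⊤ : Submodule R B) := by
  apply le_antisymm
  · intro x hx
    have hx0 : p • x = 0 := hx
    let b := Module.Free.chooseBasis R B
    have hrep : ∀ j, b.repr x j ∈ maximalIdeal R := by
      intro j
      apply aux_ann hm hne hsq
      have : b.repr (p • x) j = 0 := by rw [hx0, map_zero]; rfl
      simpa [smul_eq_mul] using this
    rw [← b.sum_repr x]
    exact Submodule.sum_mem _ fun j _ => Submodule.smul_mem_smul (hrep j) trivial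
  · intro x hx
    exact aux_smul_zero hm hne hsq B hx

lemma aux_lsmul_range :
    LinearMap.range (LinearMap.lsmul R B p) = (maximalIdeal R) • (⊤ : Submodule R B) := by
  apply le_antisymm
  · rintro x ⟨y, rfl⟩
    exact Submodule.smul_mem_smul (hm ▸ Ideal.mem_span_singleton_self p) trivial
  · rw [Submodule.smul_le]
    intro r hr x _
    rw [hm, Ideal.mem_span_singleton'] at hr
    obtain ⟨a, rfl⟩ := hr
    exact ⟨a • x, by rw [LinearMap.lsmul_apply, smul_smul, mul_comm]⟩

lemma aux_main {A : Type*} [AddCommGroup A] [Module R A] [Module.Free R A] [Module.Finite R A]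
    (f : A →ₗ[R] B)
    (hker : LinearMap.ker f = (maximalIdeal R) • (⊤ : Submodule R A))
    (hrange : LinearMap.range f = (maximalIdeal R) • (⊤ : Submodule R B)) :
    Module.finrank R A = Module.finrank R B := by
  set I := maximalIdeal R with hI
  have e1 : (A ⧸ I • (⊤ : Submodule R A)) ≃ₗ[R] (I • (⊤ : Submodule R B) : Submodule R B) :=
    (Submodule.quotEquivOfEq _ _ hker.symm).trans
      (f.quotKerEquivRange.trans (LinearEquiv.ofEq _ _ hrange))
  have e2 : (B ⧸ I • (⊤ : Submodule R B)) ≃ₗ[R] (I • (⊤ : Submodule R B) : Submodule R B) :=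
    (Submodule.quotEquivOfEq _ _ (aux_lsmul_ker hm hne hsq B).symm).trans
      ((LinearMap.lsmul R B p).quotKerEquivRange.trans
        (LinearEquiv.ofEq _ _ (aux_lsmul_range hm hne hsq B)))
  have e3 : (A ⧸ I • (⊤ : Submodule R A)) ≃ₗ[R] (B ⧸ I • (⊤ : Submodule R B)) :=
    e1.trans e2.symm
  haveI t1 : IsScalarTower R (R ⧸ I) (A ⧸ (I • (⊤ : Submodule R A))) :=
    Module.IsTorsionBySet.isScalarTower _
  haveI t2 : IsScalarTower R (R ⧸ I) (B ⧸ (I • (⊤ : Submodule R B))) :=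
    Module.IsTorsionBySet.isScalarTower _
  have e4 := e3.extendScalarsOfSurjective (S := R ⧸ I) Ideal.Quotient.mk_surjective
  rw [← aux_finrank I A, ← aux_finrank I B, LinearEquiv.finrank_eq e4]

end ring

theorem stmt_16 (R : Type*) [CommRing R] [IsLocalRing R] (p : R)
    (hm : IsLocalRing.maximalIdeal R = Ideal.span {p})
    (hne : IsLocalRing.maximalIdeal R ≠ ⊥)
    (hsq : (IsLocalRing.maximalIdeal R) ^ 2 = ⊥)
    (n : ℕ) (hn : 3 ≤ n)
    (M : ZMod n → Type*) [∀ i, AddCommGroup (M i)] [∀ i, Module R (M i)]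
    [∀ i, Module.Free R (M i)] [∀ i, Module.Finite R (M i)]
    (d : ∀ i : ZMod n, M i →ₗ[R] M (i + 1))
    (hexact : ∀ i : ZMod n, Function.Exact (d i) (d (i + 1)))
    (hmin : ∀ i : ZMod n, LinearMap.range (d i) ≤
      (IsLocalRing.maximalIdeal R) • (⊤ : Submodule R (M (i + 1)))) :
    ∀ i j : ZMod n, Module.finrank R (M i) = Module.finrank R (M j) := by
  haveI : NeZero n := ⟨by omega⟩
  -- m•⊤ is contained in every kernel
  have hkerge : ∀ i : ZMod n, (IsLocalRing.maximalIdeal R) • (⊤ : Submodule R (M i)) ≤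
      LinearMap.ker (d i) := by
    intro i
    rw [Submodule.smul_le]
    intro r hr x _
    have h1 : d i x ∈ (IsLocalRing.maximalIdeal R) • (⊤ : Submodule R (M (i+1))) :=
      hmin i (LinearMap.mem_range_self _ x)
    simp only [LinearMap.mem_ker, map_smul]
    have h2 : r • d i x ∈ (IsLocalRing.maximalIdeal R * IsLocalRing.maximalIdeal R) •
        (⊤ : Submodule R (M (i+1))) := by
      rw [mul_smul]; exact Submodule.smul_mem_smul hr h1
    rwa [← pow_two, hsq, Submodule.bot_smul, Submodule.mem_bot] at h2
  have hstep : ∀ j : ZMod n, Module.finrank R (M (j+1)) = Module.finrank R (M (j+1+1)) := by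
    intro j
    have hex1 : LinearMap.ker (d (j+1)) = LinearMap.range (d j) :=
      LinearMap.exact_iff.mp (hexact j)
    have hex2 : LinearMap.ker (d (j+1+1)) = LinearMap.range (d (j+1)) :=
      LinearMap.exact_iff.mp (hexact (j+1))
    apply aux_main hm hne hsq _ (d (j+1))
    · exact le_antisymm (hex1 ▸ hmin j) (hkerge (j+1))
    · refine le_antisymm (hmin (j+1)) ?_
      rw [← hex2]; exact hkerge (j+1+1)
  have hstep' : ∀ i : ZMod n, Module.finrank R (M i) = Module.finrank R (M (i+1)) := by
    intro i
    have h : (i - 1) + 1 = i := sub_add_cancel i 1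
    rw [← h]
    exact hstep (i - 1)
  have hiter : ∀ (k : ℕ) (i : ZMod n), Module.finrank R (M i) = Module.finrank R (M (i + k)) := by
    intro k
    induction k with
    | zero =>
      intro i
      have h0 : i + ((0:ℕ) : ZMod n) = i := by push_cast; ring
      rw [h0]
    | succ k ih =>
      intro i
      rw [ih i]
      have : (i + k) + 1 = i + (k+1 : ℕ) := by push_cast; ring
      rw [← this]
      exact hstep' (i + k)
  intro i j
  have h := hiter (j - i).val i
  rwa [ZMod.natCast_rightInverse (j - i), add_sub_cancel] at h
end
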